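/- Let T be a bounded operator on a complex Hilbert space. Then w(T)² ≤ (1/2)·w(T²) + (1/4)·‖T T* + T* T‖, where w denotes the numerical radius. -/

import Mathlib

/-!
For a unit vector `x` put `a = ⟪T x, x⟫` and `c = a / |a|`. The operator `c T + c̄ T*` has
`⟪(c T + c̄ T*) x, x⟫ = 2 |a|`, so `4 |a|² ≤ ‖c T x + c̄ T* x‖²`. Expanding the square gives
`‖T x‖² + ‖T* x‖² = re ⟪(T T* + T* T) x, x⟫ ≤ ‖T T* + T* T‖` plus the cross term
`2 re (c̄² ⟪T² x, x⟫) ≤ 2 w(T²)`.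
-/

open scoped InnerProductSpace
open ContinuousLinearMap
noncomputable section
set_option synthInstance.maxHeartbeats 1000000
set_option maxHeartbeats 1000000

variable {H : Type*} [NormedAddCommGroup H] [InnerProductSpace ℂ H] [CompleteSpace H]

/-- The numerical radius of a bounded operator. -/
noncomputable def numRadius (T : H →L[ℂ] H) : ℝ :=
  sSup {r : ℝ | ∃ x : H, ‖x‖ = 1 ∧ r = ‖(⟪T x, x⟫_ℂ)‖}

/-- The 2×2 block operator [[X, Y],[Z, W]] on H ⊕ H (ℓ² direct sum). -/
noncomputable def blockOp (X Y Z W : H →L[ℂ] H) :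
    WithLp 2 (H × H) →L[ℂ] WithLp 2 (H × H) :=
  ((WithLp.prodContinuousLinearEquiv 2 ℂ H H).symm.toContinuousLinearMap) ∘L
    ((X ∘L ContinuousLinearMap.fst ℂ H H + Y ∘L ContinuousLinearMap.snd ℂ H H).prod
      (Z ∘L ContinuousLinearMap.fst ℂ H H + W ∘L ContinuousLinearMap.snd ℂ H H)) ∘L
    ((WithLp.prodContinuousLinearEquiv 2 ℂ H H).toContinuousLinearMap)

open scoped ComplexConjugate

section InnerProduct

variable {E : Type*} [NormedAddCommGroup E] [InnerProductSpace ℂ E]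

lemma norm_smul_add_conj_smul_sq_le {c : ℂ} (hc : ‖c‖ ≤ 1) (y z : E) :
    ‖c • y + conj c • z‖ ^ 2 ≤ ‖y‖ ^ 2 + ‖z‖ ^ 2 + 2 * ‖⟪y, z⟫_ℂ‖ := by
  have hc2 : ‖c‖ ^ 2 ≤ 1 := pow_le_one₀ (norm_nonneg c) hc
  have hcross : RCLike.re ⟪c • y, conj c • z⟫_ℂ ≤ ‖⟪y, z⟫_ℂ‖ := calc
    RCLike.re ⟪c • y, conj c • z⟫_ℂ ≤ ‖⟪c • y, conj c • z⟫_ℂ‖ := Complex.re_le_norm _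
    _ = ‖c‖ ^ 2 * ‖⟪y, z⟫_ℂ‖ := by
      simp only [inner_smul_left, inner_smul_right, norm_mul, Complex.norm_conj]; ring
    _ ≤ ‖⟪y, z⟫_ℂ‖ := mul_le_of_le_one_left (norm_nonneg _) hc2
  rw [norm_add_sq (𝕜 := ℂ), norm_smul, norm_smul, Complex.norm_conj, mul_pow, mul_pow]
  nlinarith [mul_le_of_le_one_left (sq_nonneg ‖y‖) hc2,
    mul_le_of_le_one_left (sq_nonneg ‖z‖) hc2]

lemma four_mul_norm_inner_sq_le {x y z : E} (hx : ‖x‖ ≤ 1)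
    (hzx : ⟪z, x⟫_ℂ = conj ⟪y, x⟫_ℂ) :
    4 * ‖⟪y, x⟫_ℂ‖ ^ 2 ≤ ‖y‖ ^ 2 + ‖z‖ ^ 2 + 2 * ‖⟪y, z⟫_ℂ‖ := by
  set a := ⟪y, x⟫_ℂ
  set c : ℂ := a / ‖a‖
  have hc : ‖c‖ ≤ 1 := by
    rw [norm_div, Complex.norm_real, norm_norm]
    exact div_self_le_one _
  -- `conj c * a = ‖a‖` also when `a = 0`, since then `c = 0`.
  have hca : conj c * a = ‖a‖ := by
    rw [map_div₀, Complex.conj_ofReal, div_mul_eq_mul_div, mul_comm, Complex.mul_conj',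
      ← Complex.ofReal_pow, ← Complex.ofReal_div, pow_two, mul_self_div_self]
  have hinner : ⟪c • y + conj c • z, x⟫_ℂ = 2 * ‖a‖ := by
    have hac : c * conj a = ‖a‖ := by
      rw [← Complex.conj_ofReal, ← hca, map_mul, Complex.conj_conj]
    rw [inner_add_left, inner_smul_left, inner_smul_left, hzx, Complex.conj_conj, hca, hac]
    ring
  have hrotated : 2 * ‖a‖ ≤ ‖c • y + conj c • z‖ := calc
    2 * ‖a‖ = RCLike.re ⟪c • y + conj c • z, x⟫_ℂ := by
      rw [hinner]; norm_cast
    _ ≤ ‖c • y + conj c • z‖ * ‖x‖ := re_inner_le_norm _ _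
    _ ≤ ‖c • y + conj c • z‖ := mul_le_of_le_one_right (norm_nonneg _) hx
  calc 4 * ‖a‖ ^ 2 = (2 * ‖a‖) ^ 2 := by ring
    _ ≤ ‖c • y + conj c • z‖ ^ 2 := pow_le_pow_left₀ (by positivity) hrotated 2
    _ ≤ _ := norm_smul_add_conj_smul_sq_le hc y z

lemma norm_inner_apply_self_le (P : E →L[ℂ] E) {x : E} (hx : ‖x‖ ≤ 1) :
    ‖⟪P x, x⟫_ℂ‖ ≤ ‖P‖ := calc
  ‖⟪P x, x⟫_ℂ‖ ≤ ‖P x‖ * ‖x‖ := norm_inner_le_norm _ _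
  _ ≤ ‖P‖ * ‖x‖ * ‖x‖ := by gcongr; exact P.le_opNorm x
  _ ≤ ‖P‖ * 1 * 1 := by gcongr
  _ = ‖P‖ := by ring

lemma numRadius_bddAbove (T : E →L[ℂ] E) :
    BddAbove {r : ℝ | ∃ x : E, ‖x‖ = 1 ∧ r = ‖⟪T x, x⟫_ℂ‖} := by
  refine ⟨‖T‖, ?_⟩
  rintro r ⟨x, hx, rfl⟩
  exact norm_inner_apply_self_le T hx.le

lemma numRadius_nonneg (T : E →L[ℂ] E) : 0 ≤ numRadius T :=
  Real.sSup_nonneg (by rintro r ⟨x, -, rfl⟩; exact norm_nonneg _)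

lemma norm_inner_apply_self_le_numRadius (T : E →L[ℂ] E) {x : E} (hx : ‖x‖ = 1) :
    ‖⟪T x, x⟫_ℂ‖ ≤ numRadius T :=
  le_csSup (numRadius_bddAbove T) ⟨x, hx, rfl⟩

lemma numRadius_le {T : E →L[ℂ] E} {c : ℝ} (hc : 0 ≤ c)
    (h : ∀ x : E, ‖x‖ = 1 → ‖⟪T x, x⟫_ℂ‖ ≤ c) : numRadius T ≤ c :=
  Real.sSup_le (by rintro r ⟨x, hx, rfl⟩; exact h x hx) hc

end InnerProduct

lemma inner_apply_adjoint_apply (T : H →L[ℂ] H) (x : H) :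
    ⟪T x, adjoint T x⟫_ℂ = ⟪(T ^ 2) x, x⟫_ℂ := by
  rw [adjoint_inner_right]; rfl

lemma inner_adjoint_apply_self (T : H →L[ℂ] H) (x : H) :
    ⟪adjoint T x, x⟫_ℂ = conj ⟪T x, x⟫_ℂ := by
  rw [adjoint_inner_left, inner_conj_symm]

lemma norm_apply_sq_add_norm_adjoint_apply_sq (T : H →L[ℂ] H) (x : H) :
    ‖T x‖ ^ 2 + ‖adjoint T x‖ ^ 2 = RCLike.re ⟪(T * adjoint T + adjoint T * T) x, x⟫_ℂ := by
  rw [apply_norm_sq_eq_inner_adjoint_left, apply_norm_sq_eq_inner_adjoint_left, adjoint_adjoint,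
    add_apply, inner_add_left, map_add, add_comm]
  rfl

lemma norm_inner_apply_self_sq_le (T : H →L[ℂ] H) {x : H} (hx : ‖x‖ = 1) :
    ‖⟪T x, x⟫_ℂ‖ ^ 2 ≤
      (1 / 2) * numRadius (T ^ 2) + (1 / 4) * ‖T * adjoint T + adjoint T * T‖ := by
  have hmain := four_mul_norm_inner_sq_le hx.le (inner_adjoint_apply_self T x)
  rw [norm_apply_sq_add_norm_adjoint_apply_sq, inner_apply_adjoint_apply] at hmain
  have hP := (RCLike.re_le_norm _).trans (norm_inner_apply_self_le
    (T * adjoint T + adjoint T * T) hx.le)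
  have hT2 := norm_inner_apply_self_le_numRadius (T ^ 2) hx
  linarith

theorem numRadius_sq_ineq (T : H →L[ℂ] H) :
    numRadius T ^ 2 ≤
      (1 / 2) * numRadius (T ^ 2) + (1 / 4) * ‖T * adjoint T + adjoint T * T‖ := by
  set c := (1 / 2) * numRadius (T ^ 2) + (1 / 4) * ‖T * adjoint T + adjoint T * T‖
  have hc : 0 ≤ c := by
    have := numRadius_nonneg (T ^ 2)
    positivity
  have hsqrt : numRadius T ≤ √c := numRadius_le (Real.sqrt_nonneg c) fun x hx ↦
    Real.le_sqrt_of_sq_le (norm_inner_apply_self_sq_le T hx)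
  calc numRadius T ^ 2 ≤ √c ^ 2 := pow_le_pow_left₀ (numRadius_nonneg T) hsqrt 2
    _ = c := Real.sq_sqrt hc
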